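/- Let L be the model of the free graded Lie algebra on two generators a, b of odd degree described in the context. The family of elements ⁅b, ad(a)^j(b)⁆ for j ≥ 0 is linearly independent in L; in particular each of these elements is a nonzero element of L^{(2, j+2)}. -/

import Mathlib

/-!
Common setup: the free graded Lie algebra on two odd-degree generators `a`, `b`,
modelled inside its universal enveloping algebra `A := FreeAlgebra ℚ (Fin 2)`.
-/

noncomputable section

namespace Omnibus

/-- The free associative unital `ℚ`-algebra on two generators. -/
abbrev A : Type := FreeAlgebra ℚ (Fin 2)

/-- The first generator, of odd degree. -/
def a : A := FreeAlgebra.ι ℚ 0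

/-- The second generator, of odd degree. -/
def b : A := FreeAlgebra.ι ℚ 1

/-- The word (noncommutative monomial) in the letters `a`, `b` associated to a
list of letters. -/
def word (w : List (Fin 2)) : A := (w.map (FreeAlgebra.ι ℚ)).prod

/-- The `ℚ`-basis of `A` given by the words in `a`, `b`. -/
def basisWords : Module.Basis (FreeMonoid (Fin 2)) ℚ A := FreeAlgebra.basisFreeMonoid ℚ (Fin 2)

/-- The `ℚ`-linear projection of `A` onto the span of the words of odd length,
sending every word of even length to `0`. -/
def pr : A →ₗ[ℚ] A :=
  basisWords.constr ℚ fun w =>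
    if Odd (FreeMonoid.toList w).length then word (FreeMonoid.toList w) else 0

/-- The bracket `⁅x,y⁆ = x*y − y*x + 2·(π y)·(π x)`; on elements homogeneous for the
parity grading by word length this is the super-commutator for both generators odd. -/
def br (x y : A) : A := x * y - y * x + 2 * pr y * pr x

/-- A `ℚ`-subspace of `A` closed under the bracket. -/
def IsBracketClosed (S : Submodule ℚ A) : Prop := ∀ x ∈ S, ∀ y ∈ S, br x y ∈ S

/-- `L`: the smallest `ℚ`-subspace of `A` containing `a`, `b` and closed under the
bracket; a model of the free graded Lie algebra on two odd-degree generators. -/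
def L : Submodule ℚ A := sInf {S : Submodule ℚ A | a ∈ S ∧ b ∈ S ∧ IsBracketClosed S}

/-- The span of the set of words `w` satisfying a property `P`. -/
def wordsSpan (P : List (Fin 2) → Prop) : Submodule ℚ A :=
  Submodule.span ℚ (word '' {w | P w})

/-- `L^{(k)}`: the part of `L` of word length `k` in `b`. -/
def Lk (k : ℕ) : Submodule ℚ A := L ⊓ wordsSpan fun w => w.count 1 = k

/-- `L^{(k,n)}`: the part of `L` of word length `k` in `b` and total word length `n`. -/
def Lkn (k n : ℕ) : Submodule ℚ A :=
  L ⊓ wordsSpan fun w => w.count 1 = k ∧ w.length = n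

/-- The `j`-fold iterated adjoint map `ad(x)^j(y)`. -/
def adIter (x : A) (j : ℕ) (y : A) : A := (br x)^[j] y

end Omnibus

/-!
The bracket is bihomogeneous for the grading by (number of `b`'s, length), so `⁅b, ad(a)^j b⁆`
lies in `L^{(2,j+2)}`, and for distinct `j` these elements have distinct lengths. By induction
`ad(a)^j b` has coefficient `1` on the word `a^j b`; hence `⁅b, ad(a)^j b⁆` has coefficient
`2`, `1` or `-1` (for `j = 0`, `j > 0` even, `j` odd) on the word `a^j b b`. Rescaled, these
coefficient functionals form a dual family, which gives linear independence.
-/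

namespace Omnibus

open Submodule

def homogeneous (k n : ℕ) : Submodule ℚ A := wordsSpan fun w => w.count 1 = k ∧ w.length = n

lemma word_append (u v : List (Fin 2)) : word (u ++ v) = word u * word v := by
  simp [word]

lemma word_singleton (i : Fin 2) : word [i] = FreeAlgebra.ι ℚ i := by
  simp [word]

lemma basisWords_apply (m : FreeMonoid (Fin 2)) : basisWords m = word m.toList := by
  simp [basisWords, FreeAlgebra.basisFreeMonoid, FreeAlgebra.equivMonoidAlgebraFreeMonoid, word,
    FreeMonoid.lift_apply]

lemma linearMap_ext_word {M : Type*} [AddCommMonoid M] [Module ℚ M] {f g : A →ₗ[ℚ] M}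
    (h : ∀ w, f (word w) = g (word w)) : f = g :=
  basisWords.ext fun m => by rw [basisWords_apply]; exact h _

lemma pr_word (w : List (Fin 2)) : pr (word w) = if Odd w.length then word w else 0 := by
  have h := basisWords.constr_basis ℚ
    (fun m => if Odd (FreeMonoid.toList m).length then word (FreeMonoid.toList m) else 0)
    (FreeMonoid.ofList w)
  rwa [basisWords_apply] at h

lemma word_mem_wordsSpan {P : List (Fin 2) → Prop} {w : List (Fin 2)} (hw : P w) :
    word w ∈ wordsSpan P :=
  subset_span ⟨w, hw, rfl⟩

lemma mul_mem_wordsSpan {P Q R : List (Fin 2) → Prop} (hPQR : ∀ u v, P u → Q v → R (u ++ v))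
    {x y : A} (hx : x ∈ wordsSpan P) (hy : y ∈ wordsSpan Q) : x * y ∈ wordsSpan R := by
  have hle : wordsSpan P * wordsSpan Q ≤ wordsSpan R := by
    rw [wordsSpan, wordsSpan, span_mul_span, span_le]
    rintro _ ⟨_, ⟨u, hu, rfl⟩, _, ⟨v, hv, rfl⟩, rfl⟩
    show word u * word v ∈ _
    rw [← word_append]
    exact word_mem_wordsSpan (hPQR u v hu hv)
  exact hle (mul_mem_mul hx hy)

lemma pr_mem_wordsSpan {P : List (Fin 2) → Prop} {x : A} (hx : x ∈ wordsSpan P) :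
    pr x ∈ wordsSpan P := by
  have hle : wordsSpan P ≤ (wordsSpan P).comap pr := by
    rw [wordsSpan, span_le]
    rintro _ ⟨w, hw, rfl⟩
    rw [SetLike.mem_coe, mem_comap, pr_word]
    split_ifs
    exacts [word_mem_wordsSpan hw, zero_mem _]
  exact hle hx

lemma mul_mem_homogeneous {x y : A} {k n k' n' : ℕ} (hx : x ∈ homogeneous k n)
    (hy : y ∈ homogeneous k' n') : x * y ∈ homogeneous (k + k') (n + n') :=
  mul_mem_wordsSpan (fun u v hu hv => by simp [List.count_append, hu.1, hu.2, hv.1, hv.2]) hx hy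

lemma br_mem_homogeneous {x y : A} {k n k' n' : ℕ} (hx : x ∈ homogeneous k n)
    (hy : y ∈ homogeneous k' n') : br x y ∈ homogeneous (k + k') (n + n') := by
  have hyx : y * x ∈ homogeneous (k + k') (n + n') := by
    rw [add_comm k, add_comm n]
    exact mul_mem_homogeneous hy hx
  have hpr : pr y * pr x ∈ homogeneous (k + k') (n + n') := by
    rw [add_comm k, add_comm n]
    exact mul_mem_homogeneous (pr_mem_wordsSpan hy) (pr_mem_wordsSpan hx)
  rw [br, mul_assoc, two_mul]
  exact add_mem (sub_mem (mul_mem_homogeneous hx hy) hyx) (add_mem hpr hpr)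

lemma adIter_zero (x y : A) : adIter x 0 y = y := rfl

lemma adIter_succ (x : A) (j : ℕ) (y : A) : adIter x (j + 1) y = br x (adIter x j y) :=
  Function.iterate_succ_apply' _ _ _

lemma adIter_mem_homogeneous {x y : A} {k n k' n' : ℕ} (hx : x ∈ homogeneous k n)
    (hy : y ∈ homogeneous k' n') (j : ℕ) :
    adIter x j y ∈ homogeneous (j * k + k') (j * n + n') := by
  induction j with
  | zero => simpa [adIter_zero] using hy
  | succ j ih =>
    rw [adIter_succ]
    convert br_mem_homogeneous hx ih using 2 <;> ring

lemma a_eq_word : a = word [0] :=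
  (word_singleton 0).symm

lemma b_eq_word : b = word [1] :=
  (word_singleton 1).symm

lemma a_mem_homogeneous : a ∈ homogeneous 0 1 :=
  a_eq_word ▸ word_mem_wordsSpan (by simp)

lemma b_mem_homogeneous : b ∈ homogeneous 1 1 :=
  b_eq_word ▸ word_mem_wordsSpan (by simp)

lemma a_mem_L : a ∈ L :=
  mem_sInf.2 fun _ hS => hS.1

lemma b_mem_L : b ∈ L :=
  mem_sInf.2 fun _ hS => hS.2.1

lemma br_mem_L {x y : A} (hx : x ∈ L) (hy : y ∈ L) : br x y ∈ L :=
  mem_sInf.2 fun S hS => hS.2.2 x (mem_sInf.1 hx S hS) y (mem_sInf.1 hy S hS)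

lemma adIter_mem_L {x y : A} (hx : x ∈ L) (hy : y ∈ L) (j : ℕ) : adIter x j y ∈ L := by
  induction j with
  | zero => exact hy
  | succ j ih => rw [adIter_succ]; exact br_mem_L hx ih

lemma br_b_adIter_a_b_mem_Lkn (j : ℕ) : br b (adIter a j b) ∈ Lkn 2 (j + 2) := by
  refine ⟨br_mem_L b_mem_L (adIter_mem_L a_mem_L b_mem_L j), (?_ : _ ∈ homogeneous 2 (j + 2))⟩
  convert br_mem_homogeneous b_mem_homogeneous
    (adIter_mem_homogeneous a_mem_homogeneous b_mem_homogeneous j) using 2 <;> ring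

def coeff (u : List (Fin 2)) : A →ₗ[ℚ] ℚ := basisWords.coord (FreeMonoid.ofList u)

lemma coeff_word (u w : List (Fin 2)) : coeff u (word w) = if w = u then 1 else 0 := by
  rw [← FreeMonoid.toList_ofList w, ← basisWords_apply]
  classical
  rw [coeff, Module.Basis.coord_apply, Module.Basis.repr_self, Finsupp.single_apply]
  simp only [EmbeddingLike.apply_eq_iff_eq]
  congr

lemma coeff_eq_zero_of_mem_wordsSpan {P : List (Fin 2) → Prop} {x : A} (hx : x ∈ wordsSpan P)
    {u : List (Fin 2)} (hu : ¬ P u) : coeff u x = 0 := by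
  have hle : wordsSpan P ≤ LinearMap.ker (coeff u) := by
    rw [wordsSpan, span_le]
    rintro _ ⟨w, hw, rfl⟩
    rw [SetLike.mem_coe, LinearMap.mem_ker, coeff_word, if_neg]
    rintro rfl
    exact hu hw
  exact hle hx

lemma coeff_cons_iota_mul (i j : Fin 2) (u : List (Fin 2)) (x : A) :
    coeff (j :: u) (FreeAlgebra.ι ℚ i * x) = if i = j then coeff u x else 0 := by
  have key : (coeff (j :: u)).comp (LinearMap.mulLeft ℚ (FreeAlgebra.ι ℚ i)) =
      if i = j then coeff u else 0 := by
    refine linearMap_ext_word fun w => ?_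
    split_ifs with h <;>
      simp [← word_singleton, ← word_append, coeff_word, h]
  split_ifs at key ⊢ <;> exact LinearMap.congr_fun key x

lemma coeff_append_mul_iota (i j : Fin 2) (u : List (Fin 2)) (x : A) :
    coeff (u ++ [j]) (x * FreeAlgebra.ι ℚ i) = if i = j then coeff u x else 0 := by
  have key : (coeff (u ++ [j])).comp (LinearMap.mulRight ℚ (FreeAlgebra.ι ℚ i)) =
      if i = j then coeff u else 0 := by
    refine linearMap_ext_word fun w => ?_
    split_ifs with h <;>
      simp [← word_singleton, ← word_append, coeff_word, h]
  split_ifs at key ⊢ <;> exact LinearMap.congr_fun key x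

lemma coeff_pr (u : List (Fin 2)) (x : A) :
    coeff u (pr x) = if Odd u.length then coeff u x else 0 := by
  have key : (coeff u).comp pr = if Odd u.length then coeff u else 0 := by
    refine linearMap_ext_word fun w => ?_
    rw [LinearMap.comp_apply, pr_word]
    by_cases hwu : w = u
    · subst hwu
      split_ifs <;> simp
    · split_ifs <;> simp [coeff_word, hwu]
  split_ifs at key ⊢ <;> exact LinearMap.congr_fun key x

lemma pr_a : pr a = a := by
  rw [a_eq_word, pr_word, if_pos (by decide)]

lemma pr_b : pr b = b := by
  rw [b_eq_word, pr_word, if_pos (by decide)]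

lemma coeff_adIter_a_b (j : ℕ) : coeff (List.replicate j 0 ++ [1]) (adIter a j b) = 1 := by
  induction j with
  | zero => simp [adIter_zero, b_eq_word, coeff_word]
  | succ j ih =>
    rw [adIter_succ]
    generalize adIter a j b = c at ih
    rw [br, pr_a, a, map_add, map_sub, coeff_append_mul_iota, coeff_append_mul_iota,
      List.replicate_succ, List.cons_append, coeff_cons_iota_mul, ih]
    simp

lemma coeff_br_b_adIter_a_b (j : ℕ) :
    coeff (List.replicate j 0 ++ [1, 1]) (br b (adIter a j b)) =
      (if j = 0 then 1 else 0) - 1 + 2 * if Even j then 1 else 0 := by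
  have hc := coeff_adIter_a_b j
  generalize adIter a j b = c at hc ⊢
  have h_left : coeff (List.replicate j 0 ++ [1, 1]) (b * c) = if j = 0 then 1 else 0 := by
    cases j with
    | zero => simpa [b, coeff_cons_iota_mul] using hc
    | succ j => simp [List.replicate_succ, b, coeff_cons_iota_mul]
  have h_right (x : A) :
      coeff (List.replicate j 0 ++ [1, 1]) (x * b) = coeff (List.replicate j 0 ++ [1]) x := by
    rw [show List.replicate j (0 : Fin 2) ++ [1, 1] = List.replicate j 0 ++ [1] ++ [1] by simp, b,
      coeff_append_mul_iota, if_pos rfl]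
  rw [br, pr_b, map_add, map_sub, h_left, h_right, h_right, two_mul, map_add, coeff_pr, hc]
  simp only [List.length_append, List.length_replicate, List.length_singleton, Nat.odd_add_one,
    Nat.not_odd_iff_even]
  split_ifs <;> norm_num

lemma coeff_br_b_adIter_a_b_ne_zero (j : ℕ) :
    coeff (List.replicate j 0 ++ [1, 1]) (br b (adIter a j b)) ≠ 0 := by
  rw [coeff_br_b_adIter_a_b]
  obtain rfl | h0 := eq_or_ne j 0
  · norm_num
  · simp only [h0, if_false]
    split_ifs <;> norm_num

lemma coeff_br_b_adIter_a_b_of_ne {i j : ℕ} (hij : i ≠ j) :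
    coeff (List.replicate i 0 ++ [1, 1]) (br b (adIter a j b)) = 0 := by
  refine coeff_eq_zero_of_mem_wordsSpan (br_b_adIter_a_b_mem_Lkn j).2 fun h => hij ?_
  simpa using h.2

end Omnibus

open Omnibus in
/-- The family `⁅b, ad(a)^j(b)⁆`, `j ≥ 0`, is linearly independent in `L`; in particular each
of these elements is a nonzero element of `L^{(2,j+2)}`. -/
theorem bracket_b_adIter_linearIndependent :
    LinearIndependent ℚ (fun j : ℕ => br b (adIter a j b)) ∧
    ∀ j : ℕ, br b (adIter a j b) ∈ Lkn 2 (j + 2) ∧ br b (adIter a j b) ≠ 0 := by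
  have hne := coeff_br_b_adIter_a_b_ne_zero
  refine ⟨?_, fun j => ⟨br_b_adIter_a_b_mem_Lkn j, fun h => hne j (by rw [h, map_zero])⟩⟩
  refine .of_pairwise_dual_eq_zero_one _
    (fun i => (coeff (List.replicate i 0 ++ [1, 1]) (br b (adIter a i b)))⁻¹ •
      coeff (List.replicate i 0 ++ [1, 1]))
    (fun i j hij => ?_) (fun i => inv_mul_cancel₀ (hne i))
  simp only [LinearMap.smul_apply, coeff_br_b_adIter_a_b_of_ne hij, smul_zero]
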